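/- arXiv:2109.15151 — 5 statements merged into one kernel-verified Lean document; each statement's English description precedes it below -/
import Mathlib

section
/- Let e : ℝ^{d×d} × ℝ → ℝ be strongly quasiconvex with constant c₀ at every point (in the sense that ∫_Ω [e(λ₁+∇φ, λ₂+ψ) − e(λ₁,λ₂) − e_η(λ₁,λ₂)ψ] ≥ c₀ ∫_Ω [|V_p(∇φ)|² + |V_q(ψ)|²] for all φ ∈ W^{1,p}_0(Ω), ψ ∈ L^q(Ω)). Then e is strongly (curl,0)-quasiconvex: there is a constant c > 0 such that ∫_Ω [e(λ₁+∇φ, λ₂+ψ) − e(λ₁,λ₂)] ≥ c ∫_Ω [|V_p(∇φ)|² + |V_q(ψ)|²] for all φ ∈ W^{1,p}_0(Ω) and ψ ∈ L^q(Ω) with ∫_Ω ψ = 0. -/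
open MeasureTheory

/-- if `e` is strongly quasiconvex with constant `c₀` at every point,
then `e` is strongly `(curl,0)`-quasiconvex: there is `c > 0` such that
`∫_Ω [e(λ₁+∇φ, λ₂+ψ) − e(λ₁,λ₂)] ≥ c ∫_Ω [|V_p(∇φ)|² + |V_q(ψ)|²]`
for all `φ ∈ W^{1,p}_0(Ω)` and `ψ ∈ L^q(Ω)` with `∫_Ω ψ = 0`. -/
theorem strong_quasiconvex_implies_curl_zero_quasiconvex
    (d : ℕ) (hd : 0 < d) (p q : ℝ) (hp : 2 ≤ p) (hq : 2 ≤ q)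
    (e : ((EuclideanSpace ℝ (Fin d) →L[ℝ] EuclideanSpace ℝ (Fin d)) × ℝ) → ℝ)
    (eη : ((EuclideanSpace ℝ (Fin d) →L[ℝ] EuclideanSpace ℝ (Fin d)) × ℝ) → ℝ)
    (he : Continuous e)
    (heη : ∀ (l1 : EuclideanSpace ℝ (Fin d) →L[ℝ] EuclideanSpace ℝ (Fin d)) (l2 : ℝ),
      HasDerivAt (fun t => e (l1, t)) (eη (l1, l2)) l2)
    (c₀ : ℝ) (hc₀ : 0 < c₀)
    (hqc : ∀ (Ω : Set (EuclideanSpace ℝ (Fin d))), IsOpen Ω → Ω.Nonempty →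
      Bornology.IsBounded Ω → volume (frontier Ω) = 0 →
      ∀ (l1 : EuclideanSpace ℝ (Fin d) →L[ℝ] EuclideanSpace ℝ (Fin d)) (l2 : ℝ)
        (φ : EuclideanSpace ℝ (Fin d) → EuclideanSpace ℝ (Fin d))
        (ψ : EuclideanSpace ℝ (Fin d) → ℝ),
        ContDiff ℝ 1 φ → tsupport φ ⊆ Ω → Continuous ψ →
        c₀ * ∫ x in Ω, ((‖fderiv ℝ φ x‖ ^ p + ‖fderiv ℝ φ x‖ ^ (2:ℝ))
            + (|ψ x| ^ q + |ψ x| ^ (2:ℝ)))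
          ≤ ∫ x in Ω, (e (l1 + fderiv ℝ φ x, l2 + ψ x) - e (l1, l2) - eη (l1, l2) * ψ x)) :
    ∃ c > 0, ∀ (Ω : Set (EuclideanSpace ℝ (Fin d))), IsOpen Ω → Ω.Nonempty →
      Bornology.IsBounded Ω → volume (frontier Ω) = 0 →
      ∀ (l1 : EuclideanSpace ℝ (Fin d) →L[ℝ] EuclideanSpace ℝ (Fin d)) (l2 : ℝ)
        (φ : EuclideanSpace ℝ (Fin d) → EuclideanSpace ℝ (Fin d))
        (ψ : EuclideanSpace ℝ (Fin d) → ℝ),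
        ContDiff ℝ 1 φ → tsupport φ ⊆ Ω → Continuous ψ →
        (∫ x in Ω, ψ x) = 0 →
        c * ∫ x in Ω, ((‖fderiv ℝ φ x‖ ^ p + ‖fderiv ℝ φ x‖ ^ (2:ℝ))
            + (|ψ x| ^ q + |ψ x| ^ (2:ℝ)))
          ≤ ∫ x in Ω, (e (l1 + fderiv ℝ φ x, l2 + ψ x) - e (l1, l2)) := by
  refine ⟨c₀, hc₀, fun Ω hΩo hΩne hΩb hΩf l1 l2 φ ψ hφ hsupp hψ hψ0 => ?_⟩
  have hint : ∀ f : EuclideanSpace ℝ (Fin d) → ℝ, Continuous f →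
      IntegrableOn f Ω volume := fun f hf =>
    (ContinuousOn.integrableOn_compact hΩb.isCompact_closure hf.continuousOn).mono_set subset_closure
  have hA : Continuous fun x => e (l1 + fderiv ℝ φ x, l2 + ψ x) - e (l1, l2) := by
    have hdφ : Continuous fun x => fderiv ℝ φ x := hφ.continuous_fderiv one_ne_zero
    exact ((he.comp ((continuous_const.add hdφ).prodMk
      (continuous_const.add hψ))).sub continuous_const)
  have hC : Continuous fun x => eη (l1, l2) * ψ x := continuous_const.mul hψ
  have hsplit : (∫ x in Ω, (e (l1 + fderiv ℝ φ x, l2 + ψ x) - e (l1, l2)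
        - eη (l1, l2) * ψ x))
      = (∫ x in Ω, (e (l1 + fderiv ℝ φ x, l2 + ψ x) - e (l1, l2)))
        - ∫ x in Ω, eη (l1, l2) * ψ x :=
    integral_sub (hint _ hA) (hint _ hC)
  have hCzero : (∫ x in Ω, eη (l1, l2) * ψ x) = 0 := by
    rw [integral_const_mul, hψ0, mul_zero]
  have := hqc Ω hΩo hΩne hΩb hΩf l1 l2 φ ψ hφ hsupp hψ
  rwa [hsplit, hCzero, sub_zero] at this
end

section
/- Let e : ℝ^{d×d} × ℝ → ℝ be strongly quasiconvex with constant c₀ (as in Definition of strong quasiconvexity) at every (λ₁,λ₂) with |λ₁| + |λ₂| ≤ K, and assume the relative-function bound |(|V_p|²)(λ₁+ξ₁ | λ₁)| ≤ C(|ξ₁|^p + |ξ₁|²) and similarly for |V_q|², valid on |λ₁|+|λ₂| ≤ K with constant C = C(K). Define ẽ(z₁,z₂) := e(z₁,z₂) − C₁|V_p(z₁)|² − C₂|V_q(z₂)|² with C₁, C₂ ≤ c₀/(2C). Then ẽ is strongly quasiconvex with constant c₀/2 at every (λ₁,λ₂) with |λ₁| + |λ₂| ≤ K: for every subcube Q′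 ⊆ Q, all φ ∈ W^{1,p}_0(Q′) and ψ ∈ L^q(Q′), ∫_{Q′} [ẽ(λ₁+∇φ, λ₂+ψ) − ẽ(λ₁,λ₂) − ẽ_η(λ₁,λ₂)ψ] ≥ (c₀/2) ∫_{Q′} [|V_p(∇φ)|² + |V_q(ψ)|²]. -/
open MeasureTheory Pointwise

/-- The space of `d×d` matrices, modelled as linear maps on `ℝ^d`. -/
abbrev MatSp (d : ℕ) := EuclideanSpace ℝ (Fin d) →L[ℝ] EuclideanSpace ℝ (Fin d)

/-- The open unit cube `(0,1)^d`. -/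
def UnitCube (d : ℕ) : Set (EuclideanSpace ℝ (Fin d)) :=
  {x | ∀ i, x i ∈ Set.Ioo (0:ℝ) 1}


/-- The unit cube is a bounded set. -/
lemma aux_unitCube_bounded (d : ℕ) :
    Bornology.IsBounded {x : EuclideanSpace ℝ (Fin d) | ∀ i, x i ∈ Set.Ioo (0:ℝ) 1} := by
  apply (Metric.isBounded_closedBall (x := (0 : EuclideanSpace ℝ (Fin d)))
    (r := Real.sqrt d)).subset
  intro x hx
  rw [Metric.mem_closedBall, dist_zero_right, EuclideanSpace.norm_eq]
  apply Real.sqrt_le_sqrt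
  calc (∑ i, ‖x i‖ ^ 2) ≤ ∑ _i : Fin d, (1:ℝ) := by
        apply Finset.sum_le_sum
        intro i _
        have h := hx i
        have h1 : |x i| ≤ 1 := by
          rw [abs_le]; constructor <;> [linarith [h.1]; linarith [h.2]]
        calc ‖x i‖ ^ 2 = |x i| ^ 2 := by rw [Real.norm_eq_abs]
          _ ≤ 1 ^ 2 := by apply pow_le_pow_left₀ (abs_nonneg _) h1
          _ = 1 := one_pow 2
    _ = (d : ℝ) := by simp

/-- Integral of the derivative of a compactly supported `C¹` function vanishes. -/
lemma aux_integral_fderiv_eq_zero {d : ℕ} {F : Type*} [NormedAddCommGroup F]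
    [NormedSpace ℝ F] [CompleteSpace F]
    (φ : EuclideanSpace ℝ (Fin d) → F) (hφ : ContDiff ℝ 1 φ)
    (hsupp : HasCompactSupport φ) :
    ∫ x, fderiv ℝ φ x = 0 := by
  have hDc : Continuous (fderiv ℝ φ) := hφ.continuous_fderiv one_ne_zero
  have hDs : HasCompactSupport (fderiv ℝ φ) := HasCompactSupport.fderiv (𝕜 := ℝ) hsupp
  have hInt : Integrable (fderiv ℝ φ) := hDc.integrable_of_hasCompactSupport hDs
  ext v
  rw [ContinuousLinearMap.zero_apply, ContinuousLinearMap.integral_apply hInt v]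
  obtain ⟨M, hM⟩ := hDs.exists_bound_of_continuous hDc
  set S : Set (EuclideanSpace ℝ (Fin d)) :=
    tsupport φ + Metric.closedBall (0 : EuclideanSpace ℝ (Fin d)) ‖v‖ with hS
  have hScomp : IsCompact S := IsCompact.add hsupp (ProperSpace.isCompact_closedBall _ _)
  set bound : EuclideanSpace ℝ (Fin d) → ℝ := S.indicator (fun _ => M * ‖v‖) with hbound
  have hline : ∀ (x : EuclideanSpace ℝ (Fin d)) (t : ℝ),
      HasDerivAt (fun s : ℝ => x + s • v) v t := by
    intro x t
    simpa using ((hasDerivAt_id t).smul_const v).const_add x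
  have h := hasDerivAt_integral_of_dominated_loc_of_deriv_le
      (μ := (volume : Measure (EuclideanSpace ℝ (Fin d))))
      (F := fun (t : ℝ) (x : EuclideanSpace ℝ (Fin d)) => φ (x + t • v))
      (F' := fun (t : ℝ) (x : EuclideanSpace ℝ (Fin d)) => fderiv ℝ φ (x + t • v) v)
      (x₀ := (0:ℝ)) (bound := bound) (Metric.ball_mem_nhds (0:ℝ) one_pos)
      (Filter.Eventually.of_forall fun t =>
        (hφ.continuous.comp (continuous_id.add continuous_const)).aestronglyMeasurable)
      (by
        simpa using hφ.continuous.integrable_of_hasCompactSupport hsupp)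
      (((hDc.comp (continuous_id.add continuous_const)).clm_apply
        continuous_const).aestronglyMeasurable)
      (by
        refine Filter.Eventually.of_forall fun x => fun t ht => ?_
        by_cases hx : x ∈ S
        · have h1 : ‖fderiv ℝ φ (x + t • v) v‖ ≤ ‖fderiv ℝ φ (x + t • v)‖ * ‖v‖ :=
            ContinuousLinearMap.le_opNorm _ v
          have h2 : ‖fderiv ℝ φ (x + t • v)‖ * ‖v‖ ≤ M * ‖v‖ :=
            mul_le_mul_of_nonneg_right (hM _) (norm_nonneg v)
          have hb : bound x = M * ‖v‖ := by rw [hbound, Set.indicator_of_mem hx]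
          rw [hb]; exact h1.trans h2
        · have hzero : fderiv ℝ φ (x + t • v) = 0 := by
            by_contra hne
            have hmem : x + t • v ∈ tsupport φ :=
              support_fderiv_subset (𝕜 := ℝ) (Function.mem_support.mpr hne)
            have hball : -(t • v) ∈ Metric.closedBall (0 : EuclideanSpace ℝ (Fin d)) ‖v‖ := by
              rw [Metric.mem_closedBall, dist_zero_right, norm_neg, norm_smul]
              have ht1 : |t| ≤ 1 := by
                have := Metric.mem_ball.mp ht
                rw [Real.dist_eq, sub_zero] at this
                exact this.le
              calc ‖t‖ * ‖v‖ ≤ 1 * ‖v‖ :=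
                    mul_le_mul_of_nonneg_right (by rwa [Real.norm_eq_abs]) (norm_nonneg v)
                _ = ‖v‖ := one_mul _
            have : x ∈ S := by
              rw [hS]
              have := Set.add_mem_add hmem hball
              simpa using this
            exact hx this
          have hb0 : bound x = 0 := by rw [hbound, Set.indicator_of_notMem hx]
          rw [hb0]
          show ‖fderiv ℝ φ (x + t • v) v‖ ≤ 0
          rw [hzero]
          simp)
      (by
        rw [hbound]
        exact (integrable_indicator_iff hScomp.measurableSet).mpr
          (integrableOn_const hScomp.measure_lt_top.ne))
      (by
        refine Filter.Eventually.of_forall fun x => fun t _ => ?_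
        exact ((hφ.differentiable one_ne_zero _).hasFDerivAt).comp_hasDerivAt t (hline x t))
  have hderiv := h.2
  have hconst : (fun t : ℝ => ∫ x, φ (x + t • v)) = fun _ => ∫ x, φ x := by
    funext t
    exact integral_add_right_eq_self _ (t • v)
  rw [hconst] at hderiv
  have hz := hderiv.unique (hasDerivAt_const _ _)
  have : (fun x : EuclideanSpace ℝ (Fin d) => fderiv ℝ φ (x + (0:ℝ) • v) v)
      = fun x => fderiv ℝ φ x v := by funext x; simp
  rw [this] at hz
  exact hz


/-- Lemma 3: if `e` is strongly quasiconvex with constant `c₀` on the ball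
of radius `K`, and the relative functions of `|V_p|²`, `|V_q|²` satisfy the bound with
constant `C = C(K)` there, then `ẽ := e − C₁|V_p|² − C₂|V_q|²` with `C₁, C₂ ≤ c₀/(2C)` is
strongly quasiconvex with constant `c₀/2` on the ball of radius `K`, over every open
subset `Q′` of the unit cube `Q`. -/
theorem perturbed_energy_strongly_quasiconvex
    (d : ℕ) (p q : ℝ) (hp : 2 ≤ p) (hq : 2 ≤ q) (K : ℝ) (hK : 0 < K)
    (c₀ C C₁ C₂ : ℝ) (hc₀ : 0 < c₀) (hC : 0 < C)
    (hC₁ : 0 < C₁) (hC₂ : 0 < C₂) (hC₁le : C₁ ≤ c₀ / (2 * C)) (hC₂le : C₂ ≤ c₀ / (2 * C))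
    (e : (MatSp d × ℝ) → ℝ) (eη : (MatSp d × ℝ) → ℝ)
    (he : Continuous e)
    (heη : ∀ (l1 : MatSp d) (l2 : ℝ), HasDerivAt (fun t => e (l1, t)) (eη (l1, l2)) l2)
    -- derivatives of the auxiliary functions `|V_p|²` and `|V_q|²`
    (gp : MatSp d → (MatSp d →L[ℝ] ℝ)) (gq : ℝ → ℝ)
    (hgp : ∀ z1 : MatSp d, HasFDerivAt (fun w : MatSp d => ‖w‖ ^ p + ‖w‖ ^ (2:ℝ)) (gp z1) z1)
    (hgq : ∀ t : ℝ, HasDerivAt (fun s : ℝ => |s| ^ q + |s| ^ (2:ℝ)) (gq t) t)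
    -- relative-function bounds for `|V_p|²` and `|V_q|²` on the ball of radius `K`
    (hrelp : ∀ (l1 ξ1 : MatSp d), ‖l1‖ ≤ K →
      |(‖l1 + ξ1‖ ^ p + ‖l1 + ξ1‖ ^ (2:ℝ)) - (‖l1‖ ^ p + ‖l1‖ ^ (2:ℝ)) - gp l1 ξ1|
        ≤ C * (‖ξ1‖ ^ p + ‖ξ1‖ ^ (2:ℝ)))
    (hrelq : ∀ (l2 ξ2 : ℝ), |l2| ≤ K →
      |(|l2 + ξ2| ^ q + |l2 + ξ2| ^ (2:ℝ)) - (|l2| ^ q + |l2| ^ (2:ℝ)) - gq l2 * ξ2|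
        ≤ C * (|ξ2| ^ q + |ξ2| ^ (2:ℝ)))
    -- strong quasiconvexity of `e` with constant `c₀` at points of the ball of radius `K`
    (hqc : ∀ (Q' : Set (EuclideanSpace ℝ (Fin d))), IsOpen Q' → Q' ⊆ UnitCube d →
      ∀ (l1 : MatSp d) (l2 : ℝ), ‖l1‖ + |l2| ≤ K →
      ∀ (φ : EuclideanSpace ℝ (Fin d) → EuclideanSpace ℝ (Fin d))
        (ψ : EuclideanSpace ℝ (Fin d) → ℝ),
        ContDiff ℝ 1 φ → tsupport φ ⊆ Q' → Continuous ψ →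
        c₀ * ∫ x in Q', ((‖fderiv ℝ φ x‖ ^ p + ‖fderiv ℝ φ x‖ ^ (2:ℝ))
            + (|ψ x| ^ q + |ψ x| ^ (2:ℝ)))
          ≤ ∫ x in Q', (e (l1 + fderiv ℝ φ x, l2 + ψ x) - e (l1, l2) - eη (l1, l2) * ψ x)) :
    -- conclusion: `ẽ` is strongly quasiconvex with constant `c₀/2` on the ball of radius `K`
    ∀ (Q' : Set (EuclideanSpace ℝ (Fin d))), IsOpen Q' → Q' ⊆ UnitCube d →
      ∀ (l1 : MatSp d) (l2 : ℝ), ‖l1‖ + |l2| ≤ K →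
      ∀ (φ : EuclideanSpace ℝ (Fin d) → EuclideanSpace ℝ (Fin d))
        (ψ : EuclideanSpace ℝ (Fin d) → ℝ),
        ContDiff ℝ 1 φ → tsupport φ ⊆ Q' → Continuous ψ →
        (c₀ / 2) * ∫ x in Q', ((‖fderiv ℝ φ x‖ ^ p + ‖fderiv ℝ φ x‖ ^ (2:ℝ))
            + (|ψ x| ^ q + |ψ x| ^ (2:ℝ)))
          ≤ ∫ x in Q',
              ((e (l1 + fderiv ℝ φ x, l2 + ψ x)
                  - C₁ * (‖l1 + fderiv ℝ φ x‖ ^ p + ‖l1 + fderiv ℝ φ x‖ ^ (2:ℝ))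
                  - C₂ * (|l2 + ψ x| ^ q + |l2 + ψ x| ^ (2:ℝ)))
                - (e (l1, l2) - C₁ * (‖l1‖ ^ p + ‖l1‖ ^ (2:ℝ))
                  - C₂ * (|l2| ^ q + |l2| ^ (2:ℝ)))
                - (eη (l1, l2) - C₂ * gq l2) * ψ x) := by
  intro Q' hQo hQs l1 l2 hball φ ψ hφ hsupp hψ
  have hl1K : ‖l1‖ ≤ K := le_trans (le_add_of_nonneg_right (abs_nonneg l2)) hball
  have hl2K : |l2| ≤ K := le_trans (le_add_of_nonneg_left (norm_nonneg l1)) hball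
  have hp0 : (0:ℝ) ≤ p := by linarith
  have hq0 : (0:ℝ) ≤ q := by linarith
  have h20 : (0:ℝ) ≤ (2:ℝ) := by norm_num
  have hQbdd : Bornology.IsBounded Q' := (aux_unitCube_bounded d).subset hQs
  have hcpt : HasCompactSupport φ :=
    Metric.isCompact_of_isClosed_isBounded (isClosed_tsupport φ) (hQbdd.subset hsupp)
  have hclQ : IsCompact (closure Q') :=
    Metric.isCompact_of_isClosed_isBounded isClosed_closure hQbdd.closure
  have hDc : Continuous (fun x => fderiv ℝ φ x) := hφ.continuous_fderiv one_ne_zero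
  have hIntOn : ∀ (h : EuclideanSpace ℝ (Fin d) → ℝ), Continuous h →
      IntegrableOn h Q' volume := fun h hh =>
    (hh.continuousOn.integrableOn_compact hclQ).mono_set subset_closure
  -- continuity of the various integrands
  have cNp : Continuous (fun x => ‖fderiv ℝ φ x‖ ^ p + ‖fderiv ℝ φ x‖ ^ (2:ℝ)) :=
    (hDc.norm.rpow_const fun _ => Or.inr hp0).add (hDc.norm.rpow_const fun _ => Or.inr h20)
  have cNq : Continuous (fun x => |ψ x| ^ q + |ψ x| ^ (2:ℝ)) :=
    (hψ.abs.rpow_const fun _ => Or.inr hq0).add (hψ.abs.rpow_const fun _ => Or.inr h20)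
  have cA : Continuous (fun x =>
      e (l1 + fderiv ℝ φ x, l2 + ψ x) - e (l1, l2) - eη (l1, l2) * ψ x) :=
    ((he.comp ((continuous_const.add hDc).prodMk (continuous_const.add hψ))).sub
      continuous_const).sub (continuous_const.mul hψ)
  have cP : Continuous (fun x =>
      (‖l1 + fderiv ℝ φ x‖ ^ p + ‖l1 + fderiv ℝ φ x‖ ^ (2:ℝ))
        - (‖l1‖ ^ p + ‖l1‖ ^ (2:ℝ)) - gp l1 (fderiv ℝ φ x)) :=
    ((((continuous_const.add hDc).norm.rpow_const fun _ => Or.inr hp0).add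
      ((continuous_const.add hDc).norm.rpow_const fun _ => Or.inr h20)).sub
        continuous_const).sub ((gp l1).continuous.comp hDc)
  have cQr : Continuous (fun x =>
      (|l2 + ψ x| ^ q + |l2 + ψ x| ^ (2:ℝ))
        - (|l2| ^ q + |l2| ^ (2:ℝ)) - gq l2 * ψ x) :=
    ((((continuous_const.add hψ).abs.rpow_const fun _ => Or.inr hq0).add
      ((continuous_const.add hψ).abs.rpow_const fun _ => Or.inr h20)).sub
        continuous_const).sub (continuous_const.mul hψ)
  have cG : Continuous (fun x => gp l1 (fderiv ℝ φ x) : _ → ℝ) :=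
    (gp l1).continuous.comp hDc
  -- integrability
  have iNp := hIntOn _ cNp
  have iNq := hIntOn _ cNq
  have iA := hIntOn _ cA
  have iP := hIntOn _ cP
  have iQr := hIntOn _ cQr
  have iG := hIntOn _ cG
  -- the base quasiconvexity inequality
  have hbase := hqc Q' hQo hQs l1 l2 hball φ ψ hφ hsupp hψ
  -- the linear term integrates to zero
  have hG0 : ∫ x in Q', gp l1 (fderiv ℝ φ x) = 0 := by
    rw [setIntegral_eq_integral_of_forall_compl_eq_zero (f := fun x => gp l1 (fderiv ℝ φ x))
      (fun x hx => by
        have hx' : x ∉ tsupport φ := fun h => hx (hsupp h)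
        have hz : fderiv ℝ φ x = 0 := by
          by_contra hne
          exact hx' (support_fderiv_subset (𝕜 := ℝ) (Function.mem_support.mpr hne))
        show (gp l1) (fderiv ℝ φ x) = 0
        rw [hz]; simp)]
    rw [ContinuousLinearMap.integral_comp_comm (gp l1)
      (hDc.integrable_of_hasCompactSupport (HasCompactSupport.fderiv (𝕜 := ℝ) hcpt))]
    rw [aux_integral_fderiv_eq_zero φ hφ hcpt]
    simp
  -- bounds on the perturbation terms
  have hPle : (∫ x in Q', ((‖l1 + fderiv ℝ φ x‖ ^ p + ‖l1 + fderiv ℝ φ x‖ ^ (2:ℝ))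
      - (‖l1‖ ^ p + ‖l1‖ ^ (2:ℝ)) - gp l1 (fderiv ℝ φ x)))
      ≤ C * ∫ x in Q', (‖fderiv ℝ φ x‖ ^ p + ‖fderiv ℝ φ x‖ ^ (2:ℝ)) := by
    rw [← integral_const_mul]
    refine integral_mono iP (iNp.const_mul C) (fun x => ?_)
    exact le_trans (le_abs_self _) (hrelp l1 (fderiv ℝ φ x) hl1K)
  have hQle : (∫ x in Q', ((|l2 + ψ x| ^ q + |l2 + ψ x| ^ (2:ℝ))
      - (|l2| ^ q + |l2| ^ (2:ℝ)) - gq l2 * ψ x))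
      ≤ C * ∫ x in Q', (|ψ x| ^ q + |ψ x| ^ (2:ℝ)) := by
    rw [← integral_const_mul]
    refine integral_mono iQr (iNq.const_mul C) (fun x => ?_)
    exact le_trans (le_abs_self _) (hrelq l2 (ψ x) hl2K)
  have hNp0 : 0 ≤ ∫ x in Q', (‖fderiv ℝ φ x‖ ^ p + ‖fderiv ℝ φ x‖ ^ (2:ℝ)) :=
    integral_nonneg fun x => by positivity
  have hNq0 : 0 ≤ ∫ x in Q', (|ψ x| ^ q + |ψ x| ^ (2:ℝ)) :=
    integral_nonneg fun x => by positivity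
  have hsum : ∫ x in Q', ((‖fderiv ℝ φ x‖ ^ p + ‖fderiv ℝ φ x‖ ^ (2:ℝ))
      + (|ψ x| ^ q + |ψ x| ^ (2:ℝ)))
      = (∫ x in Q', (‖fderiv ℝ φ x‖ ^ p + ‖fderiv ℝ φ x‖ ^ (2:ℝ)))
        + ∫ x in Q', (|ψ x| ^ q + |ψ x| ^ (2:ℝ)) := integral_add iNp iNq
  -- decompose the integral of the perturbed integrand
  have hpt : (fun x => (e (l1 + fderiv ℝ φ x, l2 + ψ x)
          - C₁ * (‖l1 + fderiv ℝ φ x‖ ^ p + ‖l1 + fderiv ℝ φ x‖ ^ (2:ℝ))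
          - C₂ * (|l2 + ψ x| ^ q + |l2 + ψ x| ^ (2:ℝ)))
        - (e (l1, l2) - C₁ * (‖l1‖ ^ p + ‖l1‖ ^ (2:ℝ))
          - C₂ * (|l2| ^ q + |l2| ^ (2:ℝ)))
        - (eη (l1, l2) - C₂ * gq l2) * ψ x)
      = fun x => (e (l1 + fderiv ℝ φ x, l2 + ψ x) - e (l1, l2) - eη (l1, l2) * ψ x)
        - (C₁ * ((‖l1 + fderiv ℝ φ x‖ ^ p + ‖l1 + fderiv ℝ φ x‖ ^ (2:ℝ))
            - (‖l1‖ ^ p + ‖l1‖ ^ (2:ℝ)) - gp l1 (fderiv ℝ φ x))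
          + (C₁ * gp l1 (fderiv ℝ φ x)
            + C₂ * ((|l2 + ψ x| ^ q + |l2 + ψ x| ^ (2:ℝ))
                - (|l2| ^ q + |l2| ^ (2:ℝ)) - gq l2 * ψ x))) := by
    funext x; ring
  have hBig : (∫ x in Q', ((e (l1 + fderiv ℝ φ x, l2 + ψ x)
          - C₁ * (‖l1 + fderiv ℝ φ x‖ ^ p + ‖l1 + fderiv ℝ φ x‖ ^ (2:ℝ))
          - C₂ * (|l2 + ψ x| ^ q + |l2 + ψ x| ^ (2:ℝ)))
        - (e (l1, l2) - C₁ * (‖l1‖ ^ p + ‖l1‖ ^ (2:ℝ))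
          - C₂ * (|l2| ^ q + |l2| ^ (2:ℝ)))
        - (eη (l1, l2) - C₂ * gq l2) * ψ x))
      = (∫ x in Q', (e (l1 + fderiv ℝ φ x, l2 + ψ x) - e (l1, l2) - eη (l1, l2) * ψ x))
        - (C₁ * (∫ x in Q', ((‖l1 + fderiv ℝ φ x‖ ^ p + ‖l1 + fderiv ℝ φ x‖ ^ (2:ℝ))
            - (‖l1‖ ^ p + ‖l1‖ ^ (2:ℝ)) - gp l1 (fderiv ℝ φ x)))
          + C₂ * (∫ x in Q', ((|l2 + ψ x| ^ q + |l2 + ψ x| ^ (2:ℝ))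
              - (|l2| ^ q + |l2| ^ (2:ℝ)) - gq l2 * ψ x))) := by
    have iP1 : IntegrableOn (fun x => C₁ * ((‖l1 + fderiv ℝ φ x‖ ^ p
        + ‖l1 + fderiv ℝ φ x‖ ^ (2:ℝ)) - (‖l1‖ ^ p + ‖l1‖ ^ (2:ℝ))
        - gp l1 (fderiv ℝ φ x))) Q' volume := iP.const_mul C₁
    have iG1 : IntegrableOn (fun x => C₁ * gp l1 (fderiv ℝ φ x)) Q' volume :=
      iG.const_mul C₁
    have iQ1 : IntegrableOn (fun x => C₂ * ((|l2 + ψ x| ^ q + |l2 + ψ x| ^ (2:ℝ))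
        - (|l2| ^ q + |l2| ^ (2:ℝ)) - gq l2 * ψ x)) Q' volume := iQr.const_mul C₂
    have iGQ : IntegrableOn (fun x => C₁ * gp l1 (fderiv ℝ φ x)
        + C₂ * ((|l2 + ψ x| ^ q + |l2 + ψ x| ^ (2:ℝ))
          - (|l2| ^ q + |l2| ^ (2:ℝ)) - gq l2 * ψ x)) Q' volume := iG1.add iQ1
    have iAll : IntegrableOn (fun x => C₁ * ((‖l1 + fderiv ℝ φ x‖ ^ p
        + ‖l1 + fderiv ℝ φ x‖ ^ (2:ℝ)) - (‖l1‖ ^ p + ‖l1‖ ^ (2:ℝ))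
        - gp l1 (fderiv ℝ φ x)) + (C₁ * gp l1 (fderiv ℝ φ x)
        + C₂ * ((|l2 + ψ x| ^ q + |l2 + ψ x| ^ (2:ℝ))
          - (|l2| ^ q + |l2| ^ (2:ℝ)) - gq l2 * ψ x))) Q' volume := iP1.add iGQ
    rw [hpt, integral_sub iA iAll, integral_add iP1 iGQ, integral_add iG1 iQ1,
      integral_const_mul, integral_const_mul, integral_const_mul, hG0]
    ring
  rw [hBig, hsum]
  rw [hsum] at hbase
  have hCC : C₁ * C ≤ c₀ / 2 ∧ C₂ * C ≤ c₀ / 2 := by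
    constructor
    · calc C₁ * C ≤ (c₀ / (2 * C)) * C := mul_le_mul_of_nonneg_right hC₁le hC.le
        _ = c₀ / 2 := by field_simp
    · calc C₂ * C ≤ (c₀ / (2 * C)) * C := mul_le_mul_of_nonneg_right hC₂le hC.le
        _ = c₀ / 2 := by field_simp
  have h1 : C₁ * (∫ x in Q', ((‖l1 + fderiv ℝ φ x‖ ^ p + ‖l1 + fderiv ℝ φ x‖ ^ (2:ℝ))
      - (‖l1‖ ^ p + ‖l1‖ ^ (2:ℝ)) - gp l1 (fderiv ℝ φ x)))
      ≤ (c₀ / 2) * ∫ x in Q', (‖fderiv ℝ φ x‖ ^ p + ‖fderiv ℝ φ x‖ ^ (2:ℝ)) := by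
    calc C₁ * _ ≤ C₁ * (C * ∫ x in Q', (‖fderiv ℝ φ x‖ ^ p + ‖fderiv ℝ φ x‖ ^ (2:ℝ))) :=
          mul_le_mul_of_nonneg_left hPle hC₁.le
      _ = (C₁ * C) * ∫ x in Q', (‖fderiv ℝ φ x‖ ^ p + ‖fderiv ℝ φ x‖ ^ (2:ℝ)) := by ring
      _ ≤ (c₀ / 2) * ∫ x in Q', (‖fderiv ℝ φ x‖ ^ p + ‖fderiv ℝ φ x‖ ^ (2:ℝ)) :=
          mul_le_mul_of_nonneg_right hCC.1 hNp0
  have h2 : C₂ * (∫ x in Q', ((|l2 + ψ x| ^ q + |l2 + ψ x| ^ (2:ℝ))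
      - (|l2| ^ q + |l2| ^ (2:ℝ)) - gq l2 * ψ x))
      ≤ (c₀ / 2) * ∫ x in Q', (|ψ x| ^ q + |ψ x| ^ (2:ℝ)) := by
    calc C₂ * _ ≤ C₂ * (C * ∫ x in Q', (|ψ x| ^ q + |ψ x| ^ (2:ℝ))) :=
          mul_le_mul_of_nonneg_left hQle hC₂.le
      _ = (C₂ * C) * ∫ x in Q', (|ψ x| ^ q + |ψ x| ^ (2:ℝ)) := by ring
      _ ≤ (c₀ / 2) * ∫ x in Q', (|ψ x| ^ q + |ψ x| ^ (2:ℝ)) :=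
          mul_le_mul_of_nonneg_right hCC.2 hNq0
  linarith
end

section
/- Let ẽ : ℝ^{d×d} × ℝ → ℝ be C² and strongly quasiconvex with constant c₀ at the point (F̄₀, η̄₀), i.e. ∫_{Q′} [ẽ(F̄₀+∇φ, η̄₀+ψ) − ẽ(F̄₀,η̄₀) − ẽ_η(F̄₀,η̄₀)ψ] ≥ (c₀/2) ∫_{Q′} [|V_p(∇φ)|² + |V_q(ψ)|²] for all φ ∈ W^{1,p}_0(Q′), ψ ∈ L^q(Q′). Then the Hessian quadratic form L̃(F̄₀,η̄₀)[(ξ₁,ξ₂),(ξ₁,ξ₂)] := ẽ_{FF}(F̄₀,η̄₀)ξ₁:ξ₁ + 2ẽ_{ηF}(F̄₀,η̄₀)ξ₁ξ₂ + ẽ_{ηη}(F̄₀,η̄₀)ξ₂² satisfies, for all φ ∈ W^{1,p}_0(Q′) and ψ ∈ L^q(Q′), ∫_{Q′} L̃(F̄₀,η̄₀)[(∇φ,ψ),(∇φ,ψ)] ≥ c₀ ∫_{Q′} (|∇φ|² + |ψ|²). -/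
set_option maxHeartbeats 1000000

open MeasureTheory Filter Topology

variable {E : Type*} [NormedAddCommGroup E] [NormedSpace ℝ E]

/-- Symmetric second difference quotient tends to the second derivative quadratic form. -/
lemma symm_quot_tendsto (f : E → ℝ) (hf : ContDiff ℝ 2 f) (x w : E) :
    Tendsto (fun h : ℝ => (f (x + h • w) + f (x - h • w) - 2 * f x) / h ^ 2) (𝓝[>] 0)
      (𝓝 (fderiv ℝ (fderiv ℝ f) x w w)) := by
  set f' := fderiv ℝ f with hf'
  set f'' := fderiv ℝ f' x with hf''
  have hder : ∀ y ∈ interior (Set.univ : Set E), HasFDerivAt f (f' y) y := fun y _ =>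
    (hf.differentiable (by norm_num) y).hasFDerivAt
  have hf'c1 : ContDiff ℝ 1 f' := hf.fderiv_right le_rfl
  have hx : HasFDerivWithinAt f' f'' (interior (Set.univ : Set E)) x :=
    ((hf'c1.differentiable (by norm_num) x).hasFDerivAt).hasFDerivWithinAt
  have A1 := convex_univ.taylor_approx_two_segment hder (Set.mem_univ x) hx
    (v := 0) (w := w) (by simp) (by simp)
  have A2 := convex_univ.taylor_approx_two_segment hder (Set.mem_univ x) hx
    (v := 0) (w := -w) (by simp) (by simp)
  have A := A1.add A2
  have hA : (fun h : ℝ => f (x + h • w) + f (x - h • w) - 2 * f x - h ^ 2 * f'' w w)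
      =o[𝓝[>] 0] (fun h : ℝ => h ^ 2) := by
    refine A.congr' (Filter.Eventually.of_forall fun h => ?_) (Filter.Eventually.of_forall fun _ => rfl)
    simp only [smul_zero, add_zero, map_zero, ContinuousLinearMap.zero_apply, smul_neg, map_neg,
      ContinuousLinearMap.neg_apply, sub_neg_eq_add, smul_eq_mul, neg_neg]
    rw [show x + -(h • w) = x - h • w by module]
    ring
  have := hA.tendsto_div_nhds_zero
  have heq : ∀ᶠ h in 𝓝[>] (0:ℝ),
      (f (x + h • w) + f (x - h • w) - 2 * f x - h ^ 2 * f'' w w) / h ^ 2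
      = (f (x + h • w) + f (x - h • w) - 2 * f x) / h ^ 2 - f'' w w := by
    filter_upwards [self_mem_nhdsWithin] with h (hh : 0 < h)
    field_simp
  have h2 := (this.congr' heq)
  have := h2.add_const (f'' w w)
  simpa using this

/-- Uniform second-order bound for the symmetric second difference. -/
lemma symm_quot_bound [FiniteDimensional ℝ E] (f : E → ℝ) (hf : ContDiff ℝ 2 f) (x : E)
    (M : ℝ) (hM : 0 ≤ M) :
    ∃ C : ℝ, ∀ w : E, ‖w‖ ≤ M → ∀ h : ℝ, 0 < h → h ≤ 1 →
      |f (x + h • w) + f (x - h • w) - 2 * f x| ≤ C * h ^ 2 := by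
  set f' := fderiv ℝ f with hf'
  have hf'c1 : ContDiff ℝ 1 f' := hf.fderiv_right le_rfl
  have hdiff : Differentiable ℝ f := hf.differentiable (by norm_num)
  -- bound the second derivative on the closed ball of radius M
  obtain ⟨K, hK⟩ := (isCompact_closedBall x M).exists_bound_of_continuousOn
    ((hf'c1.continuous_fderiv (by norm_num)).continuousOn (s := Metric.closedBall x M))
  have hK0 : 0 ≤ K := le_trans (norm_nonneg _) (hK x (Metric.mem_closedBall_self hM))
  -- Lipschitz bound for f' on the ball
  have hlip : ∀ y ∈ Metric.closedBall x M, ‖f' y - f' x‖ ≤ K * ‖y - x‖ := by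
    intro y hy
    exact (convex_closedBall x M).norm_image_sub_le_of_norm_fderiv_le
      (fun z _ => (hf'c1.differentiable (by norm_num)) z) hK
      (Metric.mem_closedBall_self hM) hy
  refine ⟨2 * K * M ^ 2, fun w hw h h0 h1 => ?_⟩
  set g : ℝ → ℝ := fun t => f (x + t • w) + f (x - t • w) with hg
  set g' : ℝ → ℝ := fun t => f' (x + t • w) w - f' (x - t • w) w with hg'
  have hgd : ∀ t : ℝ, HasDerivAt g (g' t) t := by
    intro t
    have c1 : HasDerivAt (fun t : ℝ => x + t • w) w t := by
      simpa using ((hasDerivAt_id t).smul_const w).const_add x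
    have c2 : HasDerivAt (fun t : ℝ => x - t • w) (-w) t := by
      simpa [sub_eq_add_neg] using ((hasDerivAt_id t).smul_const w).neg.const_add x
    have d1 := (hdiff (x + t • w)).hasFDerivAt.comp_hasDerivAt t c1
    have d2 := (hdiff (x - t • w)).hasFDerivAt.comp_hasDerivAt t c2
    have d := d1.add d2
    have e1 : ((f ∘ fun t => x + t • w) + f ∘ fun t => x - t • w) = g := by
      funext s; simp [hg]
    have e2 : fderiv ℝ f (x + t • w) w + fderiv ℝ f (x - t • w) (-w) = g' t := by
      rw [hg', hf']; simp [sub_eq_add_neg]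
    rw [e1, e2] at d
    exact d
  have hmem : ∀ t ∈ Set.Icc (0:ℝ) h, x + t • w ∈ Metric.closedBall x M := by
    intro t ht
    simp only [Metric.mem_closedBall, dist_eq_norm, add_sub_cancel_left]
    calc ‖t • w‖ = |t| * ‖w‖ := by rw [norm_smul, Real.norm_eq_abs]
    _ ≤ 1 * M := by
        apply mul_le_mul _ hw (norm_nonneg _) zero_le_one
        rw [abs_of_nonneg ht.1]; exact ht.2.trans h1
    _ = M := one_mul M
  have hmem' : ∀ t ∈ Set.Icc (0:ℝ) h, x - t • w ∈ Metric.closedBall x M := by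
    intro t ht
    have := hmem (t) ht
    simp only [Metric.mem_closedBall, dist_eq_norm] at this ⊢
    simpa [norm_sub_rev, norm_neg, sub_sub_cancel_left, add_sub_cancel_left] using this
  have hbound : ∀ t ∈ Set.Icc (0:ℝ) h, ‖g' t‖ ≤ 2 * K * M ^ 2 * h := by
    intro t ht
    have e1 : ‖f' (x + t • w) - f' x‖ ≤ K * (t * ‖w‖) := by
      have := hlip _ (hmem t ht)
      simpa [norm_smul, abs_of_nonneg ht.1] using this
    have e2 : ‖f' (x - t • w) - f' x‖ ≤ K * (t * ‖w‖) := by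
      have := hlip _ (hmem' t ht)
      simpa [norm_smul, abs_of_nonneg ht.1, norm_neg] using this
    have key : ‖g' t‖ ≤ (‖f' (x + t • w) - f' x‖ + ‖f' (x - t • w) - f' x‖) * ‖w‖ := by
      have : g' t = ((f' (x + t • w) - f' x) - (f' (x - t • w) - f' x)) w := by
        simp [hg', ContinuousLinearMap.sub_apply]
      rw [this]
      exact le_trans (ContinuousLinearMap.le_opNorm _ w)
        (mul_le_mul_of_nonneg_right ((norm_sub_le _ _)) (norm_nonneg w))
    have hwM : ‖w‖ ≤ M := hw
    have htM : t ≤ h := ht.2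
    have ht0 : 0 ≤ t := ht.1
    have hn : 0 ≤ ‖w‖ := norm_nonneg w
    calc ‖g' t‖ ≤ (K * (t * ‖w‖) + K * (t * ‖w‖)) * ‖w‖ := by
          apply le_trans key
          apply mul_le_mul_of_nonneg_right (add_le_add e1 e2) hn
    _ = 2 * K * (t * (‖w‖ * ‖w‖)) := by ring
    _ ≤ 2 * K * (h * (M * M)) := by
          apply mul_le_mul_of_nonneg_left _ (by linarith)
          apply mul_le_mul htM (mul_le_mul hwM hwM hn hM) (by positivity) h0.le
    _ = 2 * K * M ^ 2 * h := by ring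
  have hIcc : Convex ℝ (Set.Icc (0:ℝ) h) := convex_Icc 0 h
  have := hIcc.norm_image_sub_le_of_norm_hasDerivWithin_le
    (fun t ht => (hgd t).hasDerivWithinAt) hbound (Set.left_mem_Icc.2 h0.le)
    (Set.right_mem_Icc.2 h0.le)
  have hg0 : g 0 = 2 * f x := by simp [hg]; ring
  calc |f (x + h • w) + f (x - h • w) - 2 * f x| = ‖g h - g 0‖ := by
        rw [hg0]; simp [hg, Real.norm_eq_abs]
  _ ≤ 2 * K * M ^ 2 * h * ‖h - 0‖ := this
  _ = 2 * K * M ^ 2 * h ^ 2 := by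
        rw [sub_zero, Real.norm_eq_abs, abs_of_nonneg h0.le]; ring

/-- Lemma 4: if `ẽ ∈ C²` is strongly quasiconvex at the point `(F̄₀, η̄₀)`
(with constant `c₀/2`) on a subdomain `Q′` of the unit cube, then the Hessian quadratic
form `L̃(F̄₀,η̄₀)` of `ẽ` at that point satisfies
`∫_{Q′} L̃[(∇φ,ψ),(∇φ,ψ)] ≥ c₀ ∫_{Q′} (|∇φ|² + |ψ|²)` for all admissible test functions.
Here `ẽ_η(F̄₀,η̄₀) = Dẽ(F̄₀,η̄₀)(0,1)` and the Hessian is the second Fréchet derivative. -/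
theorem hessian_positivity_from_pointwise_quasiconvexity
    (d : ℕ) (p q : ℝ) (hp : 2 ≤ p) (hq : 2 ≤ q) (c₀ : ℝ) (hc₀ : 0 < c₀)
    (et : (MatSp d × ℝ) → ℝ) (het : ContDiff ℝ 2 et)
    (F0 : MatSp d) (η0 : ℝ)
    (Q' : Set (EuclideanSpace ℝ (Fin d))) (hQ'open : IsOpen Q') (hQ'sub : Q' ⊆ UnitCube d)
    (hQ'ne : Q'.Nonempty)
    (hqc : ∀ (φ : EuclideanSpace ℝ (Fin d) → EuclideanSpace ℝ (Fin d))
        (ψ : EuclideanSpace ℝ (Fin d) → ℝ),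
        ContDiff ℝ 1 φ → tsupport φ ⊆ Q' → Continuous ψ →
        (c₀ / 2) * ∫ x in Q', ((‖fderiv ℝ φ x‖ ^ p + ‖fderiv ℝ φ x‖ ^ (2:ℝ))
            + (|ψ x| ^ q + |ψ x| ^ (2:ℝ)))
          ≤ ∫ x in Q', (et (F0 + fderiv ℝ φ x, η0 + ψ x) - et (F0, η0)
              - fderiv ℝ et (F0, η0) (0, ψ x))) :
    ∀ (φ : EuclideanSpace ℝ (Fin d) → EuclideanSpace ℝ (Fin d))
      (ψ : EuclideanSpace ℝ (Fin d) → ℝ),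
      ContDiff ℝ 1 φ → tsupport φ ⊆ Q' → Continuous ψ →
      c₀ * ∫ x in Q', (‖fderiv ℝ φ x‖ ^ (2:ℝ) + |ψ x| ^ (2:ℝ))
        ≤ ∫ x in Q',
            (fderiv ℝ (fun z => fderiv ℝ et z) (F0, η0)
              (fderiv ℝ φ x, ψ x)) (fderiv ℝ φ x, ψ x) := by
  intro φ ψ hφ hsupp hψ
  set z0 : MatSp d × ℝ := (F0, η0) with hz0
  set v : EuclideanSpace ℝ (Fin d) → MatSp d × ℝ := fun x => (fderiv ℝ φ x, ψ x) with hv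
  have hDφc : Continuous fun x => fderiv ℝ φ x := hφ.continuous_fderiv (by norm_num)
  have hvc : Continuous v := hDφc.prodMk hψ
  have hQm : MeasurableSet Q' := hQ'open.measurableSet
  -- `Q'` is bounded, with compact closure and finite volume
  have hbd : Bornology.IsBounded Q' := by
    rw [Metric.isBounded_iff_subset_closedBall 0]
    refine ⟨Real.sqrt d, fun x hx => ?_⟩
    have hx' := hQ'sub hx
    simp only [Metric.mem_closedBall, dist_zero_right]
    rw [EuclideanSpace.norm_eq]
    apply Real.sqrt_le_sqrt
    calc ∑ i, ‖x i‖ ^ 2 ≤ ∑ _i : Fin d, (1:ℝ) := by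
          apply Finset.sum_le_sum
          intro i _
          have h1 := (hx' i).1
          have h2 := (hx' i).2
          rw [Real.norm_eq_abs]
          nlinarith [abs_nonneg (x i), le_of_lt h2, abs_of_pos h1]
    _ = (d : ℝ) := by simp
  have hK : IsCompact (closure Q') := hbd.isCompact_closure
  have hμfin : volume Q' < ⊤ := lt_of_le_of_lt (measure_mono subset_closure) hK.measure_lt_top
  -- integrability of continuous functions on `Q'`
  have hint : ∀ f : EuclideanSpace ℝ (Fin d) → ℝ, Continuous f → IntegrableOn f Q' := by
    intro f hf
    exact (hf.continuousOn.integrableOn_compact hK).mono_set subset_closure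
  -- uniform bound on `v`
  obtain ⟨M, hM⟩ := hK.exists_bound_of_continuousOn hvc.continuousOn
  obtain ⟨C, hC⟩ := symm_quot_bound et het z0 (max M 0) (le_max_right M 0)
  set A : ℝ := ∫ x in Q', (‖fderiv ℝ φ x‖ ^ (2:ℝ) + |ψ x| ^ (2:ℝ)) with hA
  -- step 1: scaled quasiconvexity inequality
  have hstep : ∀ σ : ℝ, (c₀/2) * (σ^2 * A) ≤ ∫ x in Q',
      (et (F0 + σ • fderiv ℝ φ x, η0 + σ * ψ x) - et (F0, η0)
        - fderiv ℝ et (F0, η0) (0, σ * ψ x)) := by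
    intro σ
    have hfd : ∀ y, fderiv ℝ (fun z => σ • φ z) y = σ • fderiv ℝ φ y := fun y =>
      fderiv_const_smul (hφ.differentiable (by norm_num) y) σ
    have hsupp' : tsupport (fun z => σ • φ z) ⊆ Q' := by
      refine subset_trans (closure_mono ?_) hsupp
      intro x hx
      simp only [Function.mem_support, ne_eq] at hx ⊢
      intro h0
      exact hx (by rw [h0, smul_zero])
    have h := hqc (fun z => σ • φ z) (fun z => σ * ψ z) (hφ.const_smul σ) hsupp'
      (continuous_const.mul hψ)
    simp only [hfd] at h
    refine le_trans ?_ h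
    apply mul_le_mul_of_nonneg_left _ (by positivity : (0:ℝ) ≤ c₀/2)
    rw [hA, ← integral_const_mul]
    apply setIntegral_mono_on
    · refine (hint _ ?_).const_mul _
      have h1 : Continuous fun x => ‖fderiv ℝ φ x‖ := hDφc.norm
      exact (h1.rpow_const fun x => Or.inr (by norm_num)).add
        (hψ.abs.rpow_const fun x => Or.inr (by norm_num))
    · refine hint _ ?_
      have h1 : Continuous fun x => ‖σ • fderiv ℝ φ x‖ := (hDφc.const_smul σ).norm
      have h2 : Continuous fun x => |σ * ψ x| := (continuous_const.mul hψ).abs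
      have hp0 : (0:ℝ) ≤ p := by linarith
      have hq0 : (0:ℝ) ≤ q := by linarith
      exact (((h1.rpow_const fun x => Or.inr hp0).add
        (h1.rpow_const fun x => Or.inr (by norm_num))).add
        ((h2.rpow_const fun x => Or.inr hq0).add
        (h2.rpow_const fun x => Or.inr (by norm_num))))
    · exact hQm
    · intro x _
      have e2 : ‖σ • fderiv ℝ φ x‖ ^ (2:ℝ) = σ^2 * ‖fderiv ℝ φ x‖ ^ (2:ℝ) := by
        rw [norm_smul, Real.norm_eq_abs, Real.mul_rpow (abs_nonneg σ) (norm_nonneg _),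
          show (2:ℝ) = ((2:ℕ):ℝ) by norm_num, Real.rpow_natCast, Real.rpow_natCast, sq_abs]
      have e3 : |σ * ψ x| ^ (2:ℝ) = σ^2 * |ψ x| ^ (2:ℝ) := by
        rw [abs_mul, Real.mul_rpow (abs_nonneg σ) (abs_nonneg _),
          show (2:ℝ) = ((2:ℕ):ℝ) by norm_num, Real.rpow_natCast, Real.rpow_natCast, sq_abs]
      have e4 : (0:ℝ) ≤ ‖σ • fderiv ℝ φ x‖ ^ p := Real.rpow_nonneg (norm_nonneg _) p
      have e5 : (0:ℝ) ≤ |σ * ψ x| ^ q := Real.rpow_nonneg (abs_nonneg _) q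
      nlinarith [e4, e5]
  -- step 2: the symmetrized inequality
  have hmain : ∀ ε : ℝ, 0 < ε → c₀ * (ε^2 * A) ≤ ∫ x in Q',
      (et (z0 + ε • v x) + et (z0 - ε • v x) - 2 * et z0) := by
    intro ε hε
    have h1 := hstep ε
    have h2 := hstep (-ε)
    have int1 : IntegrableOn (fun x => et (F0 + ε • fderiv ℝ φ x, η0 + ε * ψ x) - et (F0, η0)
        - fderiv ℝ et (F0, η0) (0, ε * ψ x)) Q' := by
      apply hint
      have c1 : Continuous fun x => et (F0 + ε • fderiv ℝ φ x, η0 + ε * ψ x) :=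
        het.continuous.comp ((continuous_const.add (hDφc.const_smul ε)).prodMk
          (continuous_const.add (continuous_const.mul hψ)))
      have c2 : Continuous fun x => fderiv ℝ et (F0, η0) ((0 : MatSp d), ε * ψ x) :=
        (fderiv ℝ et (F0, η0)).continuous.comp
          (continuous_const.prodMk (continuous_const.mul hψ))
      exact (c1.sub continuous_const).sub c2
    have int2 : IntegrableOn (fun x => et (F0 + (-ε) • fderiv ℝ φ x, η0 + (-ε) * ψ x)
        - et (F0, η0) - fderiv ℝ et (F0, η0) (0, (-ε) * ψ x)) Q' := by
      apply hint
      have c1 : Continuous fun x => et (F0 + (-ε) • fderiv ℝ φ x, η0 + (-ε) * ψ x) :=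
        het.continuous.comp ((continuous_const.add (hDφc.const_smul (-ε))).prodMk
          (continuous_const.add (continuous_const.mul hψ)))
      have c2 : Continuous fun x => fderiv ℝ et (F0, η0) ((0 : MatSp d), (-ε) * ψ x) :=
        (fderiv ℝ et (F0, η0)).continuous.comp
          (continuous_const.prodMk (continuous_const.mul hψ))
      exact (c1.sub continuous_const).sub c2
    have hSsum : (∫ x in Q', (et (z0 + ε • v x) + et (z0 - ε • v x) - 2 * et z0))
        = (∫ x in Q', (et (F0 + ε • fderiv ℝ φ x, η0 + ε * ψ x) - et (F0, η0)
            - fderiv ℝ et (F0, η0) (0, ε * ψ x)))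
          + ∫ x in Q', (et (F0 + (-ε) • fderiv ℝ φ x, η0 + (-ε) * ψ x) - et (F0, η0)
            - fderiv ℝ et (F0, η0) (0, (-ε) * ψ x)) := by
      rw [← integral_add int1 int2]
      apply integral_congr_ae
      apply Filter.Eventually.of_forall
      intro x
      have ea : z0 + ε • v x = (F0 + ε • fderiv ℝ φ x, η0 + ε * ψ x) := by
        simp [hz0, hv, Prod.ext_iff, smul_eq_mul]
      have eb : z0 - ε • v x = (F0 + (-ε) • fderiv ℝ φ x, η0 + (-ε) * ψ x) := by
        simp [hz0, hv, Prod.ext_iff, smul_eq_mul, sub_eq_add_neg]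
        exact (neg_smul ε _).symm
      have ec : fderiv ℝ et (F0, η0) ((0 : MatSp d), (-ε) * ψ x)
          = - fderiv ℝ et (F0, η0) ((0 : MatSp d), ε * ψ x) := by
        rw [← map_neg]
        congr 1
        simp [Prod.ext_iff]
      simp only [ea, eb, ec]
      ring
    rw [hSsum]
    have : (-ε)^2 = ε^2 := by ring
    rw [this] at h2
    linarith
  -- step 3: pass to the limit
  set B := fderiv ℝ (fderiv ℝ et) z0 with hB
  have hTend : Tendsto (fun ε : ℝ => (∫ x in Q',
        (et (z0 + ε • v x) + et (z0 - ε • v x) - 2 * et z0)) / ε ^ 2) (𝓝[>] 0)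
      (𝓝 (∫ x in Q', B (v x) (v x))) := by
    have : Tendsto (fun ε : ℝ => ∫ x in Q',
        ((et (z0 + ε • v x) + et (z0 - ε • v x) - 2 * et z0) / ε ^ 2)) (𝓝[>] 0)
        (𝓝 (∫ x in Q', B (v x) (v x))) := by
      apply tendsto_integral_filter_of_dominated_convergence (bound := fun _ => C)
      · apply Filter.Eventually.of_forall
        intro ε
        refine Continuous.aestronglyMeasurable ?_
        have c1 : Continuous fun x => et (z0 + ε • v x) :=
          het.continuous.comp (continuous_const.add (hvc.const_smul ε))
        have c2 : Continuous fun x => et (z0 - ε • v x) :=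
          het.continuous.comp (continuous_const.sub (hvc.const_smul ε))
        exact ((c1.add c2).sub continuous_const).div_const _
      · have hIoc : Set.Ioc (0:ℝ) 1 ∈ 𝓝[>] (0:ℝ) :=
          Ioc_mem_nhdsGT_of_mem ⟨le_refl 0, zero_lt_one⟩
        filter_upwards [hIoc] with ε hε
        rw [ae_restrict_iff' hQm]
        apply Filter.Eventually.of_forall
        intro x hx
        have hvx : ‖v x‖ ≤ max M 0 := le_trans (hM x (subset_closure hx)) (le_max_left M 0)
        have := hC (v x) hvx ε hε.1 hε.2
        have hε2 : (0:ℝ) < ε ^ 2 := pow_pos hε.1 2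
        rw [Real.norm_eq_abs, abs_div, abs_of_pos hε2, div_le_iff₀ hε2]
        calc |et (z0 + ε • v x) + et (z0 - ε • v x) - 2 * et z0| ≤ C * ε ^ 2 := this
        _ = C * ε ^ 2 := rfl
      · exact (integrableOn_const (ne_of_lt hμfin))
      · apply Filter.Eventually.of_forall
        intro x
        exact symm_quot_tendsto et het z0 (v x)
    refine this.congr fun ε => ?_
    rw [integral_div]
  have hfinal : c₀ * A ≤ ∫ x in Q', B (v x) (v x) := by
    refine ge_of_tendsto hTend ?_
    filter_upwards [self_mem_nhdsWithin] with ε (hε : ε ∈ Set.Ioi (0:ℝ))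
    have hε2 : (0:ℝ) < ε ^ 2 := pow_pos hε 2
    rw [le_div_iff₀ hε2]
    have := hmain ε hε
    nlinarith [this]
  exact hfinal
end

section
/- Let θ : ℝ^{d×d} × ℝ → ℝ be continuous with θ(F,η) ≥ δ > 0 for all (F,η), satisfying |θ(F,η)| ≲ 1 + |F|^{p(q-1)/q} + |η|^{q-1} (p, q ≥ 2), and suppose θ is Lipschitz on compact sets. Let r ∈ ℝ with |r| ≤ M. Then for every K > 0 there exists C₄ = C₄(M, δ, K, θ) such that for all (F̄, η̄) with |F̄|, |η̄| ≤ K and all (F, η): |(θ(F,η) − θ(F̄,η̄)) ( r/θ(F,η) − r/θ(F̄,η̄) )| ≤ C₄ (|V_p(F−F̄)|² + |V_q(η−η̄)|²). -/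
/-- Auxiliary growth inequality: `(K+t)^e ≤ (2(K+1))^a (1 + t^a)` for `0 ≤ e ≤ a`. -/
lemma aux_rpow_bound {K t e a : ℝ} (hK : 0 ≤ K) (ht : 0 ≤ t) (he : 0 ≤ e) (hea : e ≤ a) :
    (K + t) ^ e ≤ (2 * (K + 1)) ^ a * (1 + t ^ a) := by
  have hm1 : (1:ℝ) ≤ max 1 t := le_max_left _ _
  have hmt : t ≤ max 1 t := le_max_right _ _
  have h1 : K + t ≤ 2 * (K + 1) * max 1 t := by nlinarith
  have h2 : (1:ℝ) ≤ 2 * (K + 1) * max 1 t := by nlinarith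
  have hb0 : (0:ℝ) ≤ 2 * (K + 1) := by linarith
  calc (K + t) ^ e ≤ (2 * (K + 1) * max 1 t) ^ e :=
        Real.rpow_le_rpow (by linarith) h1 he
    _ ≤ (2 * (K + 1) * max 1 t) ^ a := Real.rpow_le_rpow_of_exponent_le h2 hea
    _ = (2 * (K + 1)) ^ a * (max 1 t) ^ a :=
        Real.mul_rpow hb0 (by linarith)
    _ ≤ (2 * (K + 1)) ^ a * (1 + t ^ a) := by
        apply mul_le_mul_of_nonneg_left _ (Real.rpow_nonneg hb0 a)
        rcases le_total t 1 with h | h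
        · rw [max_eq_left h, Real.one_rpow]
          have := Real.rpow_nonneg ht a
          linarith
        · rw [max_eq_right h]
          have := Real.rpow_nonneg ht a
          linarith

set_option maxHeartbeats 1000000 in
/-- Lemma 1, bound (bound_rel.4): if `θ ≥ δ > 0` is continuous, has
the growth `|θ(F,η)| ≤ c(1 + |F|^{p(q-1)/q} + |η|^{q-1})` and is Lipschitz on compact
sets, and `|r| ≤ M`, then
`|(θ(F,η) − θ(F̄,η̄))(r/θ(F,η) − r/θ(F̄,η̄))| ≤ C₄(|V_p(F−F̄)|² + |V_q(η−η̄)|²)`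
uniformly over `|F̄|, |η̄| ≤ K`. -/
theorem radiative_term_bound
    (d : ℕ) (p q c δ M r : ℝ) (hp : 2 ≤ p) (hq : 2 ≤ q) (hc : 0 < c) (hδ : 0 < δ)
    (hM : 0 ≤ M) (hr : |r| ≤ M)
    (θ : (MatSp d × ℝ) → ℝ)
    (hθcont : Continuous θ)
    (hθpos : ∀ z : MatSp d × ℝ, δ ≤ θ z)
    (hθgrow : ∀ z : MatSp d × ℝ, |θ z| ≤ c * (1 + ‖z.1‖ ^ (p * (q - 1) / q) + |z.2| ^ (q - 1)))
    (hθlip : ∀ s : Set (MatSp d × ℝ), IsCompact s → ∃ L : NNReal, LipschitzOnWith L θ s) :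
    ∀ K > 0, ∃ C₄ > 0, ∀ (Fb F : MatSp d) (ηb η : ℝ),
      ‖Fb‖ ≤ K → |ηb| ≤ K →
      |(θ (F, η) - θ (Fb, ηb)) * (r / θ (F, η) - r / θ (Fb, ηb))|
        ≤ C₄ * ((‖F - Fb‖ ^ p + ‖F - Fb‖ ^ (2:ℝ)) + (|η - ηb| ^ q + |η - ηb| ^ (2:ℝ))) := by
  intro K hK
  obtain ⟨L, hL⟩ := hθlip (Metric.closedBall (0 : MatSp d × ℝ) (K + 1))
    (isCompact_closedBall _ _)
  set α : ℝ := p * (q - 1) / q with hα_def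
  set β : ℝ := q - 1 with hβ_def
  have hq0 : 0 < q := by linarith only [hq]
  have hα0 : 0 ≤ α := by
    rw [hα_def]
    apply div_nonneg (mul_nonneg (by linarith only [hp]) (by linarith only [hβ_def, hq])) hq0.le
  have hαp : α ≤ p := by
    rw [hα_def, hβ_def, div_le_iff₀ hq0]; nlinarith only [hp, hq]
  have hβ0 : 0 ≤ β := by rw [hβ_def]; linarith only [hq]
  have hβq : β ≤ q := by rw [hβ_def]; linarith only [hq]
  clear_value α β
  set P : ℝ := (2 * (K + 1)) ^ p with hP_def
  set Q : ℝ := (2 * (K + 1)) ^ q with hQ_def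
  have hP0 : 0 ≤ P := Real.rpow_nonneg (by linarith only [hK]) _
  have hQ0 : 0 ≤ Q := Real.rpow_nonneg (by linarith only [hK]) _
  set B : ℝ := c * (2 + 2 * P + 2 * Q) with hB_def
  have hB0 : 0 < B := by
    rw [hB_def]; apply mul_pos hc; linarith only [hP0, hQ0]
  set C₄ : ℝ := M / δ ^ 2 * (L : ℝ) ^ 2 + 4 * M * B / δ + 1 with hC_def
  have hML : 0 ≤ M / δ ^ 2 * (L : ℝ) ^ 2 := by positivity
  have hMB : 0 ≤ 4 * M * B / δ := by positivity
  have hC0 : 0 < C₄ := by rw [hC_def]; linarith only [hML, hMB]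
  clear_value B C₄
  refine ⟨C₄, hC0, ?_⟩
  intro Fb F ηb η hFb hηb
  set a : ℝ := ‖F - Fb‖ with ha_def
  set b : ℝ := |η - ηb| with hb_def
  have ha0 : 0 ≤ a := norm_nonneg _
  have hb0 : 0 ≤ b := abs_nonneg _
  have hFnorm : ‖F‖ ≤ K + a := by
    have h := norm_sub_norm_le F Fb
    rw [← ha_def] at h; linarith only [h, hFb]
  have hηnorm : |η| ≤ K + b := by
    have h := abs_sub_abs_le_abs_sub η ηb
    rw [← hb_def] at h; linarith only [h, hηb]
  set R : ℝ := (a ^ p + a ^ (2:ℝ)) + (b ^ q + b ^ (2:ℝ)) with hR_def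
  have hap0 : 0 ≤ a ^ p := Real.rpow_nonneg ha0 _
  have hbq0 : 0 ≤ b ^ q := Real.rpow_nonneg hb0 _
  have ha2 : a ^ (2:ℝ) = a ^ 2 := Real.rpow_two a
  have hb2 : b ^ (2:ℝ) = b ^ 2 := Real.rpow_two b
  have hRsub : a ^ 2 + b ^ 2 ≤ R := by
    rw [hR_def, ha2, hb2]; linarith only [hap0, hbq0]
  have hRsub' : a ^ p + b ^ q ≤ R := by
    rw [hR_def, ha2, hb2]; nlinarith only [sq_nonneg a, sq_nonneg b]
  have hR0 : 0 ≤ R := by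
    rw [hR_def, ha2, hb2]; nlinarith only [hap0, hbq0, sq_nonneg a, sq_nonneg b]
  set x : ℝ := θ (F, η) with hx_def
  set y : ℝ := θ (Fb, ηb) with hy_def
  have hx : δ ≤ x := hθpos _
  have hy : δ ≤ y := hθpos _
  have hx0 : 0 < x := lt_of_lt_of_le hδ hx
  have hy0 : 0 < y := lt_of_lt_of_le hδ hy
  have key : |(x - y) * (r / x - r / y)| = |x - y| * (|r| * |x - y| / (x * y)) := by
    rw [abs_mul]
    congr 1
    have h : r / x - r / y = r * (y - x) / (x * y) := by
      field_simp
    rw [h, abs_div, abs_mul, abs_of_pos (mul_pos hx0 hy0), abs_sub_comm y x]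
  rw [key]
  have hD0 : 0 ≤ |x - y| := abs_nonneg _
  by_cases hcase : a ≤ 1 ∧ b ≤ 1
  · -- Lipschitz case
    obtain ⟨ha1, hb1⟩ := hcase
    have hmemb : (Fb, ηb) ∈ Metric.closedBall (0 : MatSp d × ℝ) (K + 1) := by
      rw [Metric.mem_closedBall, dist_zero_right, Prod.norm_def]
      simp only [Real.norm_eq_abs]
      exact max_le (by linarith only [hFb]) (by linarith only [hηb])
    have hmem : (F, η) ∈ Metric.closedBall (0 : MatSp d × ℝ) (K + 1) := by
      rw [Metric.mem_closedBall, dist_zero_right, Prod.norm_def]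
      simp only [Real.norm_eq_abs]
      exact max_le (by linarith only [hFnorm, ha1]) (by linarith only [hηnorm, hb1])
    have hdist : dist x y ≤ (L : ℝ) * dist ((F, η) : MatSp d × ℝ) (Fb, ηb) := by
      rw [hx_def, hy_def]
      exact hL.dist_le_mul _ hmem _ hmemb
    have hdz : dist ((F, η) : MatSp d × ℝ) (Fb, ηb) = max a b := by
      rw [Prod.dist_eq, dist_eq_norm, Real.dist_eq]
    rw [Real.dist_eq, hdz] at hdist
    have hL0 : (0:ℝ) ≤ (L : ℝ) := L.coe_nonneg
    have hmax : (max a b) ^ 2 ≤ a ^ 2 + b ^ 2 := by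
      rcases max_cases a b with ⟨h, _⟩ | ⟨h, _⟩ <;> rw [h] <;>
        nlinarith only [sq_nonneg a, sq_nonneg b]
    have hmax0 : 0 ≤ max a b := le_trans ha0 (le_max_left a b)
    have hD2 : |x - y| ^ 2 ≤ (L : ℝ) ^ 2 * (a ^ 2 + b ^ 2) := by
      have h1 : |x - y| * |x - y| ≤ ((L : ℝ) * max a b) * ((L : ℝ) * max a b) :=
        mul_self_le_mul_self hD0 hdist
      nlinarith only [h1, mul_le_mul_of_nonneg_left hmax (mul_nonneg hL0 hL0)]
    have hδxy : δ ^ 2 ≤ x * y := by nlinarith only [hx, hy, hδ]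
    have hfrac : |r| * |x - y| / (x * y) ≤ M * |x - y| / δ ^ 2 := by
      apply div_le_div₀ (by positivity) (mul_le_mul_of_nonneg_right hr hD0) (by positivity) hδxy
    calc |x - y| * (|r| * |x - y| / (x * y))
        ≤ |x - y| * (M * |x - y| / δ ^ 2) :=
          mul_le_mul_of_nonneg_left hfrac hD0
      _ = M / δ ^ 2 * |x - y| ^ 2 := by ring
      _ ≤ M / δ ^ 2 * ((L : ℝ) ^ 2 * (a ^ 2 + b ^ 2)) :=
          mul_le_mul_of_nonneg_left hD2 (by positivity)
      _ = M / δ ^ 2 * (L : ℝ) ^ 2 * (a ^ 2 + b ^ 2) := by ring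
      _ ≤ M / δ ^ 2 * (L : ℝ) ^ 2 * R := mul_le_mul_of_nonneg_left hRsub hML
      _ ≤ C₄ * R := by
          apply mul_le_mul_of_nonneg_right _ hR0
          rw [hC_def]; linarith only [hMB]
  · -- growth case : max a b > 1, so R ≥ 1
    have hR1 : 1 ≤ R := by
      rw [not_and_or, not_le, not_le] at hcase
      rw [hR_def, ha2, hb2]
      rcases hcase with h | h
      · nlinarith only [h, hap0, hbq0, sq_nonneg b]
      · nlinarith only [h, hap0, hbq0, sq_nonneg a]
    have habs_sub : |x - y| ≤ x + y := by
      rw [abs_sub_le_iff]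
      constructor <;> [linarith only [hy, hδ]; linarith only [hx, hδ]]
    have hfrac : |r| * |x - y| / (x * y) ≤ 2 * M / δ := by
      rw [div_le_div_iff₀ (by positivity) hδ]
      have h1 : |r| * |x - y| ≤ M * (x + y) :=
        mul_le_mul hr habs_sub hD0 hM
      have h2 : δ * (x + y) ≤ 2 * (x * y) := by nlinarith only [hx, hy, hδ]
      nlinarith only [mul_le_mul_of_nonneg_right h1 hδ.le, mul_le_mul_of_nonneg_left h2 hM]
    have hgx : x ≤ c * (1 + (K + a) ^ α + (K + b) ^ β) := by
      have h : |θ (F, η)| ≤ c * (1 + ‖F‖ ^ α + |η| ^ β) := hθgrow (F, η)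
      rw [← hx_def] at h
      have h1 : ‖F‖ ^ α ≤ (K + a) ^ α :=
        Real.rpow_le_rpow (norm_nonneg _) hFnorm hα0
      have h2 : |η| ^ β ≤ (K + b) ^ β :=
        Real.rpow_le_rpow (abs_nonneg _) hηnorm hβ0
      nlinarith only [h, h1, h2, hc, le_abs_self x]
    have hgy : y ≤ c * (1 + K ^ α + K ^ β) := by
      have h : |θ (Fb, ηb)| ≤ c * (1 + ‖Fb‖ ^ α + |ηb| ^ β) := hθgrow (Fb, ηb)
      rw [← hy_def] at h
      have h1 : ‖Fb‖ ^ α ≤ K ^ α :=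
        Real.rpow_le_rpow (norm_nonneg _) hFb hα0
      have h2 : |ηb| ^ β ≤ K ^ β :=
        Real.rpow_le_rpow (abs_nonneg _) hηb hβ0
      nlinarith only [h, h1, h2, hc, le_abs_self y]
    have hKa : (K + a) ^ α ≤ P * (1 + a ^ p) := by
      rw [hP_def]; exact aux_rpow_bound hK.le ha0 hα0 hαp
    have hKb : (K + b) ^ β ≤ Q * (1 + b ^ q) := by
      rw [hQ_def]; exact aux_rpow_bound hK.le hb0 hβ0 hβq
    have hKα : K ^ α ≤ P := by
      have h := aux_rpow_bound (t := 0) hK.le le_rfl hα0 hαp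
      rw [add_zero, Real.zero_rpow (by linarith only [hp] : p ≠ 0)] at h
      rw [← hP_def] at h; linarith only [h]
    have hKβ : K ^ β ≤ Q := by
      have h := aux_rpow_bound (t := 0) hK.le le_rfl hβ0 hβq
      rw [add_zero, Real.zero_rpow (by linarith only [hq] : q ≠ 0)] at h
      rw [← hQ_def] at h; linarith only [h]
    have hxy : x + y ≤ B * (1 + a ^ p + b ^ q) := by
      rw [hB_def]
      nlinarith only [hgx, hgy,
        mul_le_mul_of_nonneg_left hKa hc.le, mul_le_mul_of_nonneg_left hKb hc.le,
        mul_le_mul_of_nonneg_left hKα hc.le, mul_le_mul_of_nonneg_left hKβ hc.le,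
        mul_nonneg (mul_nonneg hc.le hP0) hap0, mul_nonneg (mul_nonneg hc.le hQ0) hbq0,
        mul_nonneg (mul_nonneg hc.le hP0) hbq0, mul_nonneg (mul_nonneg hc.le hQ0) hap0,
        mul_nonneg hc.le hap0, mul_nonneg hc.le hbq0,
        mul_nonneg hc.le hP0, mul_nonneg hc.le hQ0, hc.le]
    have hsum : 1 + a ^ p + b ^ q ≤ 2 * R := by
      linarith only [hR1, hRsub']
    have hD : |x - y| ≤ B * (2 * R) := by
      calc |x - y| ≤ x + y := habs_sub
        _ ≤ B * (1 + a ^ p + b ^ q) := hxy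
        _ ≤ B * (2 * R) := mul_le_mul_of_nonneg_left hsum hB0.le
    calc |x - y| * (|r| * |x - y| / (x * y))
        ≤ B * (2 * R) * (2 * M / δ) := by
          apply mul_le_mul hD hfrac (by positivity) (by positivity)
      _ = 4 * M * B / δ * R := by ring
      _ ≤ C₄ * R := by
          apply mul_le_mul_of_nonneg_right _ hR0
          rw [hC_def]; linarith only [hML]
end

section
/- Let e : ℝ^{d×d} × ℝ → ℝ be C³, strongly quasiconvex with constant c₀ at every point of B(0,K), with relative-function continuity in the base point (Lemma 2(b)): for every δ > 0 there is R > 0 such that |(λ₁,λ₂) − (μ₁,μ₂)| < R and |λ|,|μ| ≤ K imply |ẽ(λ₁+ξ₁,λ₂+ξ₂|λ₁,λ₂) − ẽ(μ₁+ξ₁,μ₂+ξ₂|μ₁,μ₂)| ≤ δ(|V_p(ξ₁)|²+|V_q(ξ₂)|²). Then there exists R = R(c₀,K) > 0 such that for every x₀ and all φ ∈ W^{1,p}_0(Q(x₀,r)), ψ ∈ L^q(Q(x₀,r)) with r ≤ R, and every (F̄,η̄) ∈ 𝒰_K: ∫_{Q(x₀,r)} ẽ(F̄(x)+∇φ, η̄(x)+ψ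 | F̄(x), η̄(x)) dx ≥ (c₀/4) ∫_{Q(x₀,r)} (|V_p(∇φ)|² + |V_q(ψ)|²) dx. -/
open MeasureTheory

/-- The open cube of center `x₀` and side `r`. -/
def Cube {d : ℕ} (x₀ : EuclideanSpace ℝ (Fin d)) (r : ℝ) : Set (EuclideanSpace ℝ (Fin d)) :=
  {x | ∀ i, |x i - x₀ i| < r / 2}

lemma cube_isOpen {d : ℕ} (x₀ : EuclideanSpace ℝ (Fin d)) (r : ℝ) : IsOpen (Cube x₀ r) := by
  have : Cube x₀ r = ⋂ i, {x : EuclideanSpace ℝ (Fin d) | |x i - x₀ i| < r / 2} := by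
    ext x; simp [Cube, Set.mem_iInter]
  rw [this]
  exact isOpen_iInter_of_finite fun i =>
    isOpen_lt (by fun_prop : Continuous fun x : EuclideanSpace ℝ (Fin d) => |x i - x₀ i|)
      continuous_const

lemma cube_subset_closedBall {d : ℕ} (x₀ : EuclideanSpace ℝ (Fin d)) {r : ℝ} (hr : 0 ≤ r) :
    Cube x₀ r ⊆ Metric.closedBall x₀ (Real.sqrt d * (r / 2)) := by
  intro x hx
  have h1 : dist x x₀ ≤ Real.sqrt (d * (r / 2) ^ 2) := by
    rw [EuclideanSpace.dist_eq]
    apply Real.sqrt_le_sqrt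
    calc ∑ i, dist (x i) (x₀ i) ^ 2 ≤ ∑ _i : Fin d, (r / 2) ^ 2 := by
          apply Finset.sum_le_sum
          intro i _
          have := le_of_lt (hx i)
          have h0 : (0:ℝ) ≤ dist (x i) (x₀ i) := dist_nonneg
          rw [Real.dist_eq] at *
          nlinarith
      _ = d * (r / 2) ^ 2 := by simp [mul_comm]
  rw [Metric.mem_closedBall]
  calc dist x x₀ ≤ Real.sqrt (d * (r / 2) ^ 2) := h1
    _ = Real.sqrt d * (r / 2) := by
        rw [Real.sqrt_mul (by positivity), Real.sqrt_sq (by linarith)]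

lemma integrableOn_cube {d : ℕ} {F : Type*} [NormedAddCommGroup F]
    {f : EuclideanSpace ℝ (Fin d) → F} (hf : Continuous f)
    (x₀ : EuclideanSpace ℝ (Fin d)) {r : ℝ} (hr : 0 ≤ r) :
    IntegrableOn f (Cube x₀ r) volume :=
  (hf.continuousOn.integrableOn_compact (isCompact_closedBall x₀ _)).mono_set
    (cube_subset_closedBall x₀ hr)

lemma integral_fderiv_cube_eq_zero {d : ℕ} {x₀ : EuclideanSpace ℝ (Fin d)} {r : ℝ} (hr : 0 < r)
    {φ : EuclideanSpace ℝ (Fin d) → EuclideanSpace ℝ (Fin d)} (hφ : ContDiff ℝ 1 φ)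
    (hs : tsupport φ ⊆ Cube x₀ r) :
    ∫ x in Cube x₀ r, fderiv ℝ φ x = 0 := by
  have hφcs : HasCompactSupport φ := by
    apply HasCompactSupport.of_support_subset_isCompact (isCompact_closedBall x₀
      (Real.sqrt d * (r / 2)))
    exact (subset_tsupport φ).trans (hs.trans (cube_subset_closedBall x₀ hr.le))
  have hder : Continuous (fderiv ℝ φ) := hφ.continuous_fderiv one_ne_zero
  have hcs' : HasCompactSupport (fderiv ℝ φ) := hφcs.fderiv ℝ
  have hint : Integrable (fderiv ℝ φ) volume := hder.integrable_of_hasCompactSupport hcs'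
  have hzero : ∀ x ∉ Cube x₀ r, fderiv ℝ φ x = 0 := by
    intro x hx
    exact fderiv_of_notMem_tsupport ℝ (fun h => hx (hs h))
  rw [setIntegral_eq_integral_of_forall_compl_eq_zero hzero]
  refine ContinuousLinearMap.ext fun v => ?_
  rw [ContinuousLinearMap.zero_apply, ContinuousLinearMap.integral_apply hint v]
  have h1 : ∫ x, (1:ℝ) • fderiv ℝ φ x v = - ∫ x, fderiv ℝ (fun _ => (1:ℝ)) x v • φ x := by
    apply integral_smul_fderiv_eq_neg_fderiv_smul_of_integrable
    · simp [fderiv_const]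
    · simpa using ((hder.clm_apply continuous_const).integrable_of_hasCompactSupport
        (hcs'.comp_left (g := fun A : MatSp d => A v) (by simp)))
    · simpa using hφ.continuous.integrable_of_hasCompactSupport hφcs
    · exact fun x _ => differentiableAt_const _
    · exact fun x _ => hφ.differentiable one_ne_zero x
  simpa [fderiv_const] using h1

/-- Lemma 5, zhang: if `ẽ ∈ C³` is strongly quasiconvex with constant `c₀`
at every point of the ball of radius `K`, and its relative function is continuous in the
base point (Lemma 2(b)), then there is `R = R(c₀,K) > 0` such that on every cube of side
`r ≤ R` and for every field `(F̄,η̄) ∈ 𝒰_K`,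
`∫ ẽ(F̄(x)+∇φ, η̄(x)+ψ | F̄(x),η̄(x)) ≥ (c₀/4) ∫ (|V_p(∇φ)|² + |V_q(ψ)|²)`. -/
theorem small_cube_coercivity
    (d : ℕ) (p q K c₀ : ℝ) (hp : 2 ≤ p) (hq : 2 ≤ q) (hK : 0 < K) (hc₀ : 0 < c₀)
    (et : (MatSp d × ℝ) → ℝ) (het : ContDiff ℝ 3 et)
    (ω : ℝ → ℝ) (hω : Filter.Tendsto ω (nhds 0) (nhds 0))
    -- strong quasiconvexity with constant `c₀` at every point of the ball of radius `K`
    (hqc : ∀ l : MatSp d × ℝ, ‖l‖ ≤ K →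
      ∀ (x₀ : EuclideanSpace ℝ (Fin d)) (r : ℝ), 0 < r →
      ∀ (φ : EuclideanSpace ℝ (Fin d) → EuclideanSpace ℝ (Fin d))
        (ψ : EuclideanSpace ℝ (Fin d) → ℝ),
        ContDiff ℝ 1 φ → tsupport φ ⊆ Cube x₀ r → Continuous ψ → tsupport ψ ⊆ Cube x₀ r →
        c₀ * ∫ x in Cube x₀ r, ((‖fderiv ℝ φ x‖ ^ p + ‖fderiv ℝ φ x‖ ^ (2:ℝ))
            + (|ψ x| ^ q + |ψ x| ^ (2:ℝ)))
          ≤ ∫ x in Cube x₀ r,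
              (et (l + (fderiv ℝ φ x, ψ x)) - et l - fderiv ℝ et l (0, ψ x)))
    -- continuity of the relative function in the base point (Lemma 2(b))
    (hcont : ∀ δ > (0:ℝ), ∃ R > (0:ℝ), ∀ l m : MatSp d × ℝ,
      ‖l‖ ≤ K → ‖m‖ ≤ K → ‖l - m‖ < R →
      ∀ ξ : MatSp d × ℝ,
        |(et (l + ξ) - et l - fderiv ℝ et l ξ) - (et (m + ξ) - et m - fderiv ℝ et m ξ)|
          ≤ δ * ((‖ξ.1‖ ^ p + ‖ξ.1‖ ^ (2:ℝ)) + (|ξ.2| ^ q + |ξ.2| ^ (2:ℝ)))) :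
    ∃ R > (0:ℝ), ∀ (x₀ : EuclideanSpace ℝ (Fin d)) (r : ℝ), 0 < r → r ≤ R →
      ∀ (zb : EuclideanSpace ℝ (Fin d) → MatSp d × ℝ),
        Continuous zb → (∀ x, ‖zb x‖ ≤ K) → (∀ x y, ‖zb x - zb y‖ ≤ ω ‖x - y‖) →
      ∀ (φ : EuclideanSpace ℝ (Fin d) → EuclideanSpace ℝ (Fin d))
        (ψ : EuclideanSpace ℝ (Fin d) → ℝ),
        ContDiff ℝ 1 φ → tsupport φ ⊆ Cube x₀ r → Continuous ψ → tsupport ψ ⊆ Cube x₀ r →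
        (c₀ / 4) * ∫ x in Cube x₀ r, ((‖fderiv ℝ φ x‖ ^ p + ‖fderiv ℝ φ x‖ ^ (2:ℝ))
            + (|ψ x| ^ q + |ψ x| ^ (2:ℝ)))
          ≤ ∫ x in Cube x₀ r,
              (et (zb x + (fderiv ℝ φ x, ψ x)) - et (zb x)
                - fderiv ℝ et (zb x) (fderiv ℝ φ x, ψ x)) := by
  obtain ⟨R₁, hR₁, hcont'⟩ := hcont (c₀ / 4) (by positivity)
  rw [Metric.tendsto_nhds_nhds] at hω
  obtain ⟨t, ht, hωt⟩ := hω R₁ hR₁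
  refine ⟨t / (Real.sqrt d + 1), by positivity, ?_⟩
  intro x₀ r hr hrR zb hzbc hzbK hzbω φ ψ hφ hφs hψ hψs
  set S := Cube x₀ r with hS
  have hSmeas : MeasurableSet S := (cube_isOpen x₀ r).measurableSet
  set l := zb x₀ with hl
  have hlK : ‖l‖ ≤ K := hzbK x₀
  have hsqd : (0:ℝ) ≤ Real.sqrt d := Real.sqrt_nonneg _
  -- closeness of the field to its frozen value on the cube
  have hclose : ∀ x ∈ S, ‖zb x - l‖ < R₁ := by
    intro x hx
    have hd : dist x x₀ ≤ Real.sqrt d * (r / 2) :=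
      cube_subset_closedBall x₀ hr.le hx
    have hdt : dist x x₀ < t := by
      have h2 : r ≤ t / (Real.sqrt d + 1) := hrR
      have h3 : Real.sqrt d * r ≤ Real.sqrt d * (t / (Real.sqrt d + 1)) :=
        mul_le_mul_of_nonneg_left h2 hsqd
      have h4 : Real.sqrt d * (t / (Real.sqrt d + 1)) < t := by
        rw [mul_div_assoc']
        rw [div_lt_iff₀ (by positivity)]
        nlinarith
      have h1 : Real.sqrt d * (r / 2) < t := by nlinarith
      linarith
    have h5 : ‖zb x - l‖ ≤ ω ‖x - x₀‖ := hzbω x x₀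
    have hdn : dist (‖x - x₀‖) 0 < t := by
      rw [Real.dist_eq, sub_zero, abs_of_nonneg (norm_nonneg _), ← dist_eq_norm]
      exact hdt
    have h6 : |ω ‖x - x₀‖| < R₁ := by
      have h7 := hωt hdn
      rw [Real.dist_eq, sub_zero] at h7
      exact h7
    calc ‖zb x - l‖ ≤ ω ‖x - x₀‖ := h5
      _ ≤ |ω ‖x - x₀‖| := le_abs_self _
      _ < R₁ := h6
  -- notations
  set ξ : EuclideanSpace ℝ (Fin d) → MatSp d × ℝ := fun x => (fderiv ℝ φ x, ψ x) with hξdef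
  set G : EuclideanSpace ℝ (Fin d) → ℝ := fun x =>
    ((‖fderiv ℝ φ x‖ ^ p + ‖fderiv ℝ φ x‖ ^ (2:ℝ)) + (|ψ x| ^ q + |ψ x| ^ (2:ℝ))) with hGdef
  set A : EuclideanSpace ℝ (Fin d) → ℝ := fun x =>
    (et (zb x + (fderiv ℝ φ x, ψ x)) - et (zb x)
      - fderiv ℝ et (zb x) (fderiv ℝ φ x, ψ x)) with hAdef
  set Bq : EuclideanSpace ℝ (Fin d) → ℝ := fun x =>
    (et (l + (fderiv ℝ φ x, ψ x)) - et l - fderiv ℝ et l (0, ψ x)) with hBqdef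
  set Bf : EuclideanSpace ℝ (Fin d) → ℝ := fun x =>
    (et (l + (fderiv ℝ φ x, ψ x)) - et l - fderiv ℝ et l (fderiv ℝ φ x, ψ x)) with hBfdef
  set Lx : EuclideanSpace ℝ (Fin d) → ℝ := fun x =>
    fderiv ℝ et l (fderiv ℝ φ x, (0:ℝ)) with hLxdef
  -- continuity
  have hφ' : Continuous fun x => fderiv ℝ φ x := (hφ.continuous_fderiv one_ne_zero)
  have het0 : Continuous et := het.continuous
  have het' : Continuous (fderiv ℝ et) := het.continuous_fderiv (by norm_num)
  have hξc : Continuous ξ := hφ'.prodMk hψ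
  have hGc : Continuous G := by
    apply Continuous.add
    · exact ((Real.continuous_rpow_const (by linarith)).comp hφ'.norm).add
        ((Real.continuous_rpow_const (by norm_num)).comp hφ'.norm)
    · exact ((Real.continuous_rpow_const (by linarith)).comp hψ.abs).add
        ((Real.continuous_rpow_const (by norm_num)).comp hψ.abs)
  have hAc : Continuous A :=
    ((het0.comp (hzbc.add hξc)).sub (het0.comp hzbc)).sub ((het'.comp hzbc).clm_apply hξc)
  have hBqc : Continuous Bq :=
    ((het0.comp (continuous_const.add hξc)).sub continuous_const).sub
      ((continuous_const : Continuous fun _ => fderiv ℝ et l).clm_apply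
        (continuous_const.prodMk hψ))
  have hBfc : Continuous Bf :=
    ((het0.comp (continuous_const.add hξc)).sub continuous_const).sub
      ((continuous_const : Continuous fun _ => fderiv ℝ et l).clm_apply hξc)
  have hLxc : Continuous Lx :=
    (continuous_const : Continuous fun _ => fderiv ℝ et l).clm_apply
      (hφ'.prodMk continuous_const)
  -- integrability
  have iG : IntegrableOn G S volume := integrableOn_cube hGc x₀ hr.le
  have iA : IntegrableOn A S volume := integrableOn_cube hAc x₀ hr.le
  have iBq : IntegrableOn Bq S volume := integrableOn_cube hBqc x₀ hr.le
  have iBf : IntegrableOn Bf S volume := integrableOn_cube hBfc x₀ hr.le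
  have iLx : IntegrableOn Lx S volume := integrableOn_cube hLxc x₀ hr.le
  -- nonnegativity of G integral
  have hGnn : 0 ≤ ∫ x in S, G x := by
    apply setIntegral_nonneg hSmeas
    intro x _
    have h1 : (0:ℝ) ≤ ‖fderiv ℝ φ x‖ ^ p := Real.rpow_nonneg (norm_nonneg _) _
    have h2 : (0:ℝ) ≤ ‖fderiv ℝ φ x‖ ^ (2:ℝ) := Real.rpow_nonneg (norm_nonneg _) _
    have h3 : (0:ℝ) ≤ |ψ x| ^ q := Real.rpow_nonneg (abs_nonneg _) _
    have h4 : (0:ℝ) ≤ |ψ x| ^ (2:ℝ) := Real.rpow_nonneg (abs_nonneg _) _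
    simp only [hGdef]
    linarith
  -- quasiconvexity at the frozen point
  have hqc' : c₀ * ∫ x in S, G x ≤ ∫ x in S, Bq x :=
    hqc l hlK x₀ r hr φ ψ hφ hφs hψ hψs
  -- ∫ Lx = 0
  have hLx0 : ∫ x in S, Lx x = 0 := by
    have hT : ∀ x, Lx x =
        ((fderiv ℝ et l).comp (ContinuousLinearMap.inl ℝ (MatSp d) ℝ)) (fderiv ℝ φ x) := by
      intro x; simp [hLxdef]
    calc ∫ x in S, Lx x
        = ∫ x in S, ((fderiv ℝ et l).comp (ContinuousLinearMap.inl ℝ (MatSp d) ℝ))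
            (fderiv ℝ φ x) := by simp_rw [hT]
      _ = ((fderiv ℝ et l).comp (ContinuousLinearMap.inl ℝ (MatSp d) ℝ))
            (∫ x in S, fderiv ℝ φ x) := by
          apply ContinuousLinearMap.integral_comp_comm
          exact integrableOn_cube hφ' x₀ hr.le
      _ = 0 := by rw [integral_fderiv_cube_eq_zero hr hφ hφs]; simp; exact map_zero _
  -- Bf = Bq - Lx
  have hBfeq : ∀ x, Bf x = Bq x - Lx x := by
    intro x
    have : (fderiv ℝ φ x, ψ x) = ((fderiv ℝ φ x, (0:ℝ)) : MatSp d × ℝ) + (0, ψ x) := by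
      simp [Prod.ext_iff]
    simp only [hBfdef, hBqdef, hLxdef]
    rw [this, map_add]
    ring
  have hBfint : ∫ x in S, Bf x = ∫ x in S, Bq x := by
    calc ∫ x in S, Bf x = ∫ x in S, (Bq x - Lx x) := by simp_rw [hBfeq]
      _ = (∫ x in S, Bq x) - ∫ x in S, Lx x := integral_sub iBq iLx
      _ = ∫ x in S, Bq x := by rw [hLx0]; ring
  -- pointwise comparison on S
  have hpt : ∀ x ∈ S, Bf x - (c₀ / 4) * G x ≤ A x := by
    intro x hx
    have h := hcont' l (zb x) hlK (hzbK x)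
      (by rw [norm_sub_rev]; exact hclose x hx) (fderiv ℝ φ x, ψ x)
    have h2 : Bf x - A x ≤ (c₀ / 4) * G x := by
      have hle := (abs_le.mp h).2
      simpa only [hBfdef, hAdef, hGdef] using hle
    linarith
  have hmono : ∫ x in S, (Bf x - (c₀ / 4) * G x) ≤ ∫ x in S, A x := by
    apply setIntegral_mono_on (iBf.sub (iG.const_mul _)) iA hSmeas hpt
  have hsplit : ∫ x in S, (Bf x - (c₀ / 4) * G x)
      = (∫ x in S, Bf x) - (c₀ / 4) * ∫ x in S, G x := by
    rw [integral_sub iBf (iG.const_mul _), integral_const_mul]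
  -- conclude
  have hfinal : (c₀ / 4) * ∫ x in S, G x ≤ ∫ x in S, A x := by
    rw [hsplit, hBfint] at hmono
    linarith [mul_nonneg hc₀.le hGnn]
  exact hfinal
end
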